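/- Assume (H1) and (H2). Every parabolic periodic point of F in Γ belongs to H(P,F) ∩ H(Q,F). In particular, if F has a parabolic periodic point then H(P,F) ∩ H(Q,F) ≠ ∅. -/

import Mathlib

/-!
Let `(ξ, r)` be parabolic of period `n` and `φ = f_ξ^n` its return map. By (H2), `(f_ξ^k)'`
strictly decreases along admissible stretches that contain a `0`, so `φ' > 1` at admissible
points below `r` and `φ' < 1` above `r`; with `φ r = r`, `φ' r = 1` this gives `φ y < y` on both
sides of `r`. Hence `φ^k 1` decreases to `r`, and no point below `r` is forward admissible.

Both fixed points are then reached by orbits that shadow `ξ` on a long window `[-B, B]` and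
follow `0^ℤ` outside it. For `P`: start at `1` (fixed by `f₀`), so the point at time `0` is
`φ^K 1 ≈ r`, and afterwards `f₀`-iterates increase to `1`. For `Q`: a point slightly below `r`
eventually leaves the domain at a `1`-symbol; by the intermediate value theorem it can be moved
so that it hits `d` exactly, after which `f₁ d = 0` stays at `0`; backwards, `f₀⁻¹`-iterates
decrease to `0`.
-/

open Set MeasureTheory Filter

namespace DGR

/-- The two-sided sequence space `Σ₂ = {0,1}^ℤ`. -/
abbrev Seq2 := ℤ → Fin 2

/-- The left shift map `σ`. -/
def shift (ξ : Seq2) : Seq2 := fun n => ξ (n + 1)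

/-- The constant sequence `0^ℤ`. -/
def zeroSeq : Seq2 := fun _ => 0

/-- The skew-product `F̃(ξ,x) = (σ ξ, f̃_{ξ₀} x)`. -/
def F (f0 f1 : ℝ → ℝ) (p : Seq2 × ℝ) : Seq2 × ℝ :=
  (shift p.1, if p.1 0 = 0 then f0 p.2 else f1 p.2)

/-- The fixed point `P = (0^ℤ, 1)`. -/
def Pfix : Seq2 × ℝ := (zeroSeq, 1)

/-- The fixed point `Q = (0^ℤ, 0)`. -/
def Qfix : Seq2 × ℝ := (zeroSeq, 0)

/-- `f_ξ^n = f_{ξ_{n-1}} ∘ ⋯ ∘ f_{ξ₀}`. -/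
def fIter (f0 f1 : ℝ → ℝ) (ξ : Seq2) : ℕ → ℝ → ℝ
  | 0, x => x
  | n + 1, x => (if ξ (n : ℤ) = 0 then f0 else f1) (fIter f0 f1 ξ n x)

/-- The derivative `(f_ξ^n)'(x)` (chain rule product). -/
def fIterDeriv (f0 f1 df0 df1 : ℝ → ℝ) (ξ : Seq2) : ℕ → ℝ → ℝ
  | 0, _ => 1
  | n + 1, x => fIterDeriv f0 f1 df0 df1 ξ n x *
      (if ξ (n : ℤ) = 0 then df0 else df1) (fIter f0 f1 ξ n x)

/-- `ξ⁺` is admissible for `x`: all forward iterates are defined and stay in `[0,1]`. -/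
def forwardAdmissible (f0 f1 : ℝ → ℝ) (d : ℝ) (ξ : Seq2) (x : ℝ) : Prop :=
  ∀ n : ℕ, fIter f0 f1 ξ n x ∈ Icc (0 : ℝ) 1 ∧ (ξ (n : ℤ) = 1 → d ≤ fIter f0 f1 ξ n x)

/-- `ξ⁻` is admissible for `x`: there is a backward orbit through `x` staying in `[0,1]`. -/
def backwardAdmissible (f0 f1 : ℝ → ℝ) (d : ℝ) (ξ : Seq2) (x : ℝ) : Prop :=
  ∃ y : ℕ → ℝ, y 0 = x ∧ ∀ m : ℕ,
    y m ∈ Icc (0 : ℝ) 1 ∧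
    (ξ (-(m : ℤ) - 1) = 0 → f0 (y (m + 1)) = y m) ∧
    (ξ (-(m : ℤ) - 1) = 1 → d ≤ y (m + 1) ∧ f1 (y (m + 1)) = y m)

/-- The maximal invariant set `Γ` of `F̃` in `Σ₂ × [0,1]`. -/
def Gamma (f0 f1 : ℝ → ℝ) (d : ℝ) : Set (Seq2 × ℝ) :=
  { p | forwardAdmissible f0 f1 d p.1 p.2 ∧ backwardAdmissible f0 f1 d p.1 p.2 }

/-- The subshift `Σ = π(Γ)` of admissible sequences. -/
def SigmaA (f0 f1 : ℝ → ℝ) (d : ℝ) : Set Seq2 := Prod.fst '' Gamma f0 f1 d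

/-- `I_{ξ⁺}`. -/
def Iplus (f0 f1 : ℝ → ℝ) (d : ℝ) (ξ : Seq2) : Set ℝ := { x | forwardAdmissible f0 f1 d ξ x }

/-- `I_{ξ⁻}`. -/
def Iminus (f0 f1 : ℝ → ℝ) (d : ℝ) (ξ : Seq2) : Set ℝ := { x | backwardAdmissible f0 f1 d ξ x }

/-- `I_ξ = I_{ξ⁺} ∩ I_{ξ⁻}`, the spine over `ξ`. -/
def Ifiber (f0 f1 : ℝ → ℝ) (d : ℝ) (ξ : Seq2) : Set ℝ := Iplus f0 f1 d ξ ∩ Iminus f0 f1 d ξ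

/-- `x_{ξ⁺}`, the left endpoint of `I_{ξ⁺} = [x_{ξ⁺}, 1]`. -/
noncomputable def xPlus (f0 f1 : ℝ → ℝ) (d : ℝ) (ξ : Seq2) : ℝ := sInf (Iplus f0 f1 d ξ)

/-- `x_{ξ⁻}`, the right endpoint of `I_{ξ⁻} = [0, x_{ξ⁻}]`. -/
noncomputable def xMinus (f0 f1 : ℝ → ℝ) (d : ℝ) (ξ : Seq2) : ℝ := sSup (Iminus f0 f1 d ξ)

/-- Hypothesis (H1), stated for strictly increasing differentiable extensions
`f0, f1 : ℝ → ℝ` with derivative functions `df0, df1`, whose restrictions to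
`[0,1]` resp. `[d,1]` are the fiber maps. -/
structure H1 (f0 f1 df0 df1 : ℝ → ℝ) (d : ℝ) : Prop where
  d_mem : d ∈ Ioo (0 : ℝ) 1
  mono0 : StrictMono f0
  mono1 : StrictMono f1
  hasDeriv0 : ∀ x, HasDerivAt f0 (df0 x) x
  hasDeriv1 : ∀ x, HasDerivAt f1 (df1 x) x
  contDeriv0 : ContinuousOn df0 (Icc 0 1)
  contDeriv1 : ContinuousOn df1 (Icc d 1)
  maps0 : MapsTo f0 (Icc 0 1) (Icc 0 1)
  surj0 : SurjOn f0 (Icc 0 1) (Icc 0 1)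
  maps1 : MapsTo f1 (Icc d 1) (Icc 0 1)
  deriv0_zero : 1 < df0 0
  deriv0_one : df0 1 ∈ Ioo (0 : ℝ) 1
  f0_above : ∀ x ∈ Ioo (0 : ℝ) 1, x < f0 x
  f1_d : f1 d = 0
  f1_below : ∀ x ∈ Icc d 1, f1 x < x
  deriv1_one : 0 < df1 1

/-- Hypothesis (H2): `f₀'` strictly decreasing, `f₁'` nonincreasing. -/
def H2 (df0 df1 : ℝ → ℝ) (d : ℝ) : Prop :=
  StrictAntiOn df0 (Icc 0 1) ∧ AntitoneOn df1 (Icc d 1)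

/-- Hypothesis (H2+) with constant `M`. -/
def H2plus (df0 df1 : ℝ → ℝ) (d M : ℝ) : Prop :=
  1 < M ∧
  (∀ x ∈ Icc (0 : ℝ) 1, ∀ y ∈ Icc (0 : ℝ) 1, x < y →
    M⁻¹ * (y - x) ≤ Real.log (df0 x) - Real.log (df0 y) ∧
      Real.log (df0 x) - Real.log (df0 y) ≤ M * (y - x)) ∧
  (∀ x ∈ Icc d 1, ∀ y ∈ Icc d 1, x < y →
    M⁻¹ * (y - x) ≤ Real.log (df1 x) - Real.log (df1 y) ∧
      Real.log (df1 x) - Real.log (df1 y) ≤ M * (y - x))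

/-- The fiber Lyapunov exponent `χ(μ) = ∫ log f'_{ξ₀}(x) dμ(ξ,x)`. -/
noncomputable def lyap (df0 df1 : ℝ → ℝ) (μ : Measure (Seq2 × ℝ)) : ℝ :=
  ∫ p, Real.log ((if p.1 0 = 0 then df0 else df1) p.2) ∂μ

/-- An `F`-invariant Borel probability measure on `Γ`. -/
def IsInvGamma (f0 f1 : ℝ → ℝ) (d : ℝ) (μ : Measure (Seq2 × ℝ)) : Prop :=
  IsProbabilityMeasure μ ∧ μ (Gamma f0 f1 d) = 1 ∧ μ.map (F f0 f1) = μ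

/-- An ergodic `F`-invariant Borel probability measure on `Γ`. -/
def IsErgGamma (f0 f1 : ℝ → ℝ) (d : ℝ) (μ : Measure (Seq2 × ℝ)) : Prop :=
  IsInvGamma f0 f1 d μ ∧ Ergodic (F f0 f1) μ

/-- A `σ`-invariant Borel probability measure on `Σ`. -/
def IsInvSigma (f0 f1 : ℝ → ℝ) (d : ℝ) (ν : Measure Seq2) : Prop :=
  IsProbabilityMeasure ν ∧ ν (SigmaA f0 f1 d) = 1 ∧ ν.map shift = ν

/-- An ergodic `σ`-invariant Borel probability measure on `Σ`. -/
def IsErgSigma (f0 f1 : ℝ → ℝ) (d : ℝ) (ν : Measure Seq2) : Prop :=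
  IsInvSigma f0 f1 d ν ∧ Ergodic shift ν

/-- `f_{[w]} = f_{w_{n-1}} ∘ ⋯ ∘ f_{w_0}` for a finite word `w`. -/
def fWord (f0 f1 : ℝ → ℝ) : List (Fin 2) → ℝ → ℝ
  | [], x => x
  | i :: w, x => fWord f0 f1 w ((if i = 0 then f0 else f1) x)

/-- The derivative `(f_{[w]})'(x)`. -/
def fWordDeriv (f0 f1 df0 df1 : ℝ → ℝ) : List (Fin 2) → ℝ → ℝ
  | [], _ => 1
  | i :: w, x => (if i = 0 then df0 x else df1 x) *
      fWordDeriv f0 f1 df0 df1 w ((if i = 0 then f0 else f1) x)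

/-- The word `w` is (forward) admissible at `x`. -/
def wordAdm (f0 f1 : ℝ → ℝ) (d : ℝ) : List (Fin 2) → ℝ → Prop
  | [], x => x ∈ Icc (0 : ℝ) 1
  | i :: w, x => x ∈ Icc (0 : ℝ) 1 ∧ (i = 1 → d ≤ x) ∧
      wordAdm f0 f1 d w ((if i = 0 then f0 else f1) x)

/-- The admissibility interval `I_{[w]}`. -/
def IWord (f0 f1 : ℝ → ℝ) (d : ℝ) (w : List (Fin 2)) : Set ℝ := { x | wordAdm f0 f1 d w x }

/-- The point `a_{[w]}`, left endpoint of `I_{[w]} = [a_{[w]}, 1]`. -/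
noncomputable def aWord (f0 f1 : ℝ → ℝ) (d : ℝ) (w : List (Fin 2)) : ℝ := sInf (IWord f0 f1 d w)

/-- The periodic sequence `w^ℤ`. -/
def perSeq (w : List (Fin 2)) : Seq2 := fun n => w.getD (n % (w.length : ℤ)).toNat 0

/-- The finite word `(ξ_a, ξ_{a+1}, …, ξ_{a+n-1})` read off a sequence. -/
def seqWord (ξ : Seq2) (a : ℤ) (n : ℕ) : List (Fin 2) := List.ofFn fun i : Fin n => ξ (a + (i.1 : ℤ))

/-- `X` is a periodic point of `F` in `Γ` with period `n ≥ 1`. -/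
def IsPerPt (f0 f1 : ℝ → ℝ) (d : ℝ) (X : Seq2 × ℝ) (n : ℕ) : Prop :=
  X ∈ Gamma f0 f1 d ∧ 1 ≤ n ∧ (F f0 f1)^[n] X = X

/-- Hyperbolic periodic point (the multiplier is different from 1). -/
def IsHypPerPt (f0 f1 df0 df1 : ℝ → ℝ) (d : ℝ) (X : Seq2 × ℝ) : Prop :=
  ∃ n, IsPerPt f0 f1 d X n ∧ fIterDeriv f0 f1 df0 df1 X.1 n X.2 ≠ 1

/-- Hyperbolic periodic point of expanding type. -/
def IsExpPerPt (f0 f1 df0 df1 : ℝ → ℝ) (d : ℝ) (X : Seq2 × ℝ) : Prop :=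
  ∃ n, IsPerPt f0 f1 d X n ∧ 1 < fIterDeriv f0 f1 df0 df1 X.1 n X.2

/-- Hyperbolic periodic point of contracting type. -/
def IsConPerPt (f0 f1 df0 df1 : ℝ → ℝ) (d : ℝ) (X : Seq2 × ℝ) : Prop :=
  ∃ n, IsPerPt f0 f1 d X n ∧ 0 < fIterDeriv f0 f1 df0 df1 X.1 n X.2 ∧
    fIterDeriv f0 f1 df0 df1 X.1 n X.2 < 1

/-- Parabolic periodic point (multiplier 1). -/
def IsParPerPt (f0 f1 df0 df1 : ℝ → ℝ) (d : ℝ) (X : Seq2 × ℝ) : Prop :=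
  ∃ n, IsPerPt f0 f1 d X n ∧ fIterDeriv f0 f1 df0 df1 X.1 n X.2 = 1

/-- The stable set `W^s(R, F)` of a point, for `F : Γ → Γ`. -/
def Ws (f0 f1 : ℝ → ℝ) (d : ℝ) (R : Seq2 × ℝ) : Set (Seq2 × ℝ) :=
  { X | (∀ k : ℕ, (F f0 f1)^[k] X ∈ Gamma f0 f1 d) ∧
      Tendsto (fun k => (F f0 f1)^[k] X) atTop (nhds R) }

/-- The unstable set `W^u(R, F) = W^s(R, F⁻¹)` of a point, for `F : Γ → Γ`. -/
def Wu (f0 f1 : ℝ → ℝ) (d : ℝ) (R : Seq2 × ℝ) : Set (Seq2 × ℝ) :=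
  { X | ∃ Z : ℕ → Seq2 × ℝ, Z 0 = X ∧
      (∀ m : ℕ, Z m ∈ Gamma f0 f1 d ∧ F f0 f1 (Z (m + 1)) = Z m) ∧
      Tendsto Z atTop (nhds R) }

/-- The stable set of the orbit of `R`. -/
def WsOrbit (f0 f1 : ℝ → ℝ) (d : ℝ) (R : Seq2 × ℝ) : Set (Seq2 × ℝ) :=
  ⋃ j : ℕ, Ws f0 f1 d ((F f0 f1)^[j] R)

/-- The unstable set of the orbit of `R`. -/
def WuOrbit (f0 f1 : ℝ → ℝ) (d : ℝ) (R : Seq2 × ℝ) : Set (Seq2 × ℝ) :=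
  ⋃ j : ℕ, Wu f0 f1 d ((F f0 f1)^[j] R)

/-- The homoclinic class `H(R,F)`. -/
def homClass (f0 f1 : ℝ → ℝ) (d : ℝ) (R : Seq2 × ℝ) : Set (Seq2 × ℝ) :=
  closure (WsOrbit f0 f1 d R ∩ WuOrbit f0 f1 d R)

/-- `R₁` and `R₂` are homoclinically related. -/
def HomRel (f0 f1 : ℝ → ℝ) (d : ℝ) (R₁ R₂ : Seq2 × ℝ) : Prop :=
  (WsOrbit f0 f1 d R₁ ∩ WuOrbit f0 f1 d R₂).Nonempty ∧
  (WuOrbit f0 f1 d R₁ ∩ WsOrbit f0 f1 d R₂).Nonempty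

/-- A set is (fiber) hyperbolic of expanding type. -/
def IsHypExpanding (f0 f1 df0 df1 : ℝ → ℝ) (Λ : Set (Seq2 × ℝ)) : Prop :=
  ∃ C : ℝ, 0 < C ∧ ∃ α : ℝ, 0 < α ∧ ∀ p ∈ Λ, ∀ n : ℕ, 1 ≤ n →
    C * Real.exp (α * n) ≤ fIterDeriv f0 f1 df0 df1 p.1 n p.2

/-- A set is (fiber) hyperbolic of contracting type (backward iterates expand). -/
def IsHypContracting (f0 f1 df0 df1 : ℝ → ℝ) (d : ℝ) (Λ : Set (Seq2 × ℝ)) : Prop :=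
  ∃ C : ℝ, 0 < C ∧ ∃ α : ℝ, 0 < α ∧ ∀ p ∈ Λ, ∀ Z : ℕ → Seq2 × ℝ, Z 0 = p →
    (∀ m : ℕ, Z m ∈ Gamma f0 f1 d ∧ F f0 f1 (Z (m + 1)) = Z m) →
    ∀ n : ℕ, 1 ≤ n → fIterDeriv f0 f1 df0 df1 (Z n).1 n (Z n).2 ≤ C * Real.exp (-(α * n))

/-- The nonwandering set `Ω(Γ, F)` of `F : Γ → Γ`. -/
def nonwandering (f0 f1 : ℝ → ℝ) (d : ℝ) : Set (Seq2 × ℝ) :=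
  { X | X ∈ Gamma f0 f1 d ∧ ∀ U : Set (Seq2 × ℝ), IsOpen U → X ∈ U →
      ∃ n : ℕ, 1 ≤ n ∧ ∃ Y ∈ U ∩ Gamma f0 f1 d, (F f0 f1)^[n] Y ∈ U ∩ Gamma f0 f1 d }

/-- The finite word `w` occurs in the sequence `ξ`. -/
def OccursIn (w : List (Fin 2)) (ξ : Seq2) : Prop :=
  ∃ k : ℤ, ∀ i : ℕ, i < w.length → ξ (k + (i : ℤ)) = w.getD i 0

/-- The set `Σ^het` of heteroclinic admissible sequences. -/
def SigmaHet (f0 f1 : ℝ → ℝ) (d : ℝ) : Set Seq2 :=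
  { ξ | ξ ∈ SigmaA f0 f1 d ∧ ∃ k : ℤ, ∃ w : List (Fin 2),
      (∀ m : ℤ, m < k → ξ m = 0) ∧
      (∀ i : ℕ, i < w.length → ξ (k + (i : ℤ)) = w.getD i 0) ∧
      (∀ m : ℤ, k + (w.length : ℤ) ≤ m → ξ m = 0) ∧
      fWord f0 f1 w 1 = 0 }

/-- `Σ^cod = Σ ∖ Σ^het`. -/
def SigmaCod (f0 f1 : ℝ → ℝ) (d : ℝ) : Set Seq2 := SigmaA f0 f1 d \ SigmaHet f0 f1 d

/-- `Γ^cod = π⁻¹(Σ^cod) ∩ Γ`. -/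
def GammaCod (f0 f1 : ℝ → ℝ) (d : ℝ) : Set (Seq2 × ℝ) :=
  { p ∈ Gamma f0 f1 d | p.1 ∈ SigmaCod f0 f1 d }

/-- `Σ^sing`: sequences whose spine is a singleton. -/
def SigmaSing (f0 f1 : ℝ → ℝ) (d : ℝ) : Set Seq2 :=
  { ξ | ξ ∈ SigmaA f0 f1 d ∧ (Ifiber f0 f1 d ξ).Subsingleton }

/-- `Σ^spine`: sequences whose spine is a nondegenerate interval. -/
def SigmaSpine (f0 f1 : ℝ → ℝ) (d : ℝ) : Set Seq2 :=
  { ξ | ξ ∈ SigmaA f0 f1 d ∧ ¬ (Ifiber f0 f1 d ξ).Subsingleton }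

/-- `T` restricted to `S` is topologically transitive. -/
def TransOn {α : Type*} [TopologicalSpace α] (T : α → α) (S : Set α) : Prop :=
  ∀ U V : Set α, IsOpen U → IsOpen V → (U ∩ S).Nonempty → (V ∩ S).Nonempty →
    ∃ n : ℕ, 1 ≤ n ∧ (T^[n] '' (U ∩ S) ∩ (V ∩ S)).Nonempty

/-- `T` restricted to `S` is topologically mixing. -/
def MixOn {α : Type*} [TopologicalSpace α] (T : α → α) (S : Set α) : Prop :=
  ∀ U V : Set α, IsOpen U → IsOpen V → (U ∩ S).Nonempty → (V ∩ S).Nonempty →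
    ∃ N : ℕ, ∀ n : ℕ, N ≤ n → (T^[n] '' (U ∩ S) ∩ (V ∩ S)).Nonempty

/-- A subshift of finite type: the sequences avoiding a finite list of forbidden words. -/
def IsSFT (S : Set Seq2) : Prop :=
  ∃ Fw : Finset (List (Fin 2)), S = { ξ | ∀ w ∈ Fw, ¬ OccursIn w ξ }

/-- Number of words of length `n` appearing in sequences of `S`. -/
noncomputable def wordCount (S : Set Seq2) (n : ℕ) : ℕ :=
  Nat.card { w : List (Fin 2) // w.length = n ∧ ∃ ξ ∈ S, OccursIn w ξ }

/-- Topological entropy of the shift on a subshift `S`, as exponential growth rate of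
the number of words. -/
noncomputable def subshiftEntropy (S : Set Seq2) : ℝ :=
  Filter.limsup (fun n : ℕ => Real.log (wordCount S n) / n) Filter.atTop

/-- `Λ` is `F`-invariant. -/
def IsInvariantSet (f0 f1 : ℝ → ℝ) (Λ : Set (Seq2 × ℝ)) : Prop := F f0 f1 '' Λ = Λ

/-- `Λ` is locally maximal: it is the set of full orbits inside some neighborhood. -/
def IsLocallyMaximal (f0 f1 : ℝ → ℝ) (Λ : Set (Seq2 × ℝ)) : Prop :=
  ∃ V : Set (Seq2 × ℝ), IsOpen V ∧ Λ ⊆ V ∧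
    Λ = { X | ∃ Z : ℤ → Seq2 × ℝ, Z 0 = X ∧ (∀ n : ℤ, Z (n + 1) = F f0 f1 (Z n)) ∧
      ∀ n : ℤ, Z n ∈ V }

/-- Basic set with uniform fiber expansion. -/
def IsBasicExp (f0 f1 df0 df1 : ℝ → ℝ) (d : ℝ) (Λ : Set (Seq2 × ℝ)) : Prop :=
  Λ ⊆ Gamma f0 f1 d ∧ IsCompact Λ ∧ IsInvariantSet f0 f1 Λ ∧ IsLocallyMaximal f0 f1 Λ ∧
  TransOn (F f0 f1) Λ ∧ IsHypExpanding f0 f1 df0 df1 Λ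

/-- Basic set with uniform fiber contraction. -/
def IsBasicCon (f0 f1 df0 df1 : ℝ → ℝ) (d : ℝ) (Λ : Set (Seq2 × ℝ)) : Prop :=
  Λ ⊆ Gamma f0 f1 d ∧ IsCompact Λ ∧ IsInvariantSet f0 f1 Λ ∧ IsLocallyMaximal f0 f1 Λ ∧
  TransOn (F f0 f1) Λ ∧ IsHypContracting f0 f1 df0 df1 d Λ

/-- The entropy function `𝓗(p) = -p log p - (1-p) log (1-p)`. -/
noncomputable def entH (p : ℝ) : ℝ := -(p * Real.log p) - (1 - p) * Real.log (1 - p)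

variable {f0 f1 df0 df1 : ℝ → ℝ} {d : ℝ}

def shiftZ (a : ℤ) (ξ : Seq2) : Seq2 := fun m => ξ (m + a)

@[simp] lemma shiftZ_apply (a : ℤ) (ξ : Seq2) (m : ℤ) : shiftZ a ξ m = ξ (m + a) := rfl

lemma shiftZ_shiftZ (a b : ℤ) (ξ : Seq2) : shiftZ a (shiftZ b ξ) = shiftZ (a + b) ξ := by
  funext m
  simp [add_assoc, add_comm a b]

@[simp] lemma shiftZ_zero (ξ : Seq2) : shiftZ 0 ξ = ξ := by
  funext m
  simp

def branch (g0 g1 : ℝ → ℝ) (i : Fin 2) : ℝ → ℝ := if i = 0 then g0 else g1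

@[simp] lemma branch_zero (g0 g1 : ℝ → ℝ) : branch g0 g1 0 = g0 := rfl

@[simp] lemma branch_one (g0 g1 : ℝ → ℝ) : branch g0 g1 1 = g1 := rfl

lemma fIter_succ (ζ : Seq2) (k : ℕ) (x : ℝ) :
    fIter f0 f1 ζ (k + 1) x = branch f0 f1 (ζ k) (fIter f0 f1 ζ k x) := rfl

lemma fIterDeriv_succ (ζ : Seq2) (k : ℕ) (x : ℝ) :
    fIterDeriv f0 f1 df0 df1 ζ (k + 1) x =
      fIterDeriv f0 f1 df0 df1 ζ k x * branch df0 df1 (ζ k) (fIter f0 f1 ζ k x) := rfl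

lemma fIter_add (ζ : Seq2) (a b : ℕ) (x : ℝ) :
    fIter f0 f1 ζ (a + b) x = fIter f0 f1 (shiftZ a ζ) b (fIter f0 f1 ζ a x) := by
  induction b with
  | zero => rfl
  | succ b ih =>
    rw [← add_assoc, fIter_succ, fIter_succ, ih, shiftZ_apply]
    push_cast
    rw [add_comm (b : ℤ)]

lemma fIter_congr {ζ ζ' : Seq2} {k : ℕ} (h : ∀ t < k, ζ t = ζ' t) (x : ℝ) :
    fIter f0 f1 ζ k x = fIter f0 f1 ζ' k x := by
  induction k with
  | zero => rfl
  | succ k ih => rw [fIter_succ, fIter_succ, ih fun t ht => h t (by omega), h k k.lt_succ_self]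

lemma fIter_of_eq_zero {ζ : Seq2} {k : ℕ} (h : ∀ t < k, ζ t = 0) (x : ℝ) :
    fIter f0 f1 ζ k x = f0^[k] x := by
  induction k with
  | zero => rfl
  | succ k ih =>
    rw [fIter_succ, h k k.lt_succ_self, branch_zero, ih fun t ht => h t (by omega),
      Function.iterate_succ_apply']

lemma fIterDeriv_of_eq_zero {ζ : Seq2} {k : ℕ} (h : ∀ t < k, ζ t = 0) {x : ℝ}
    (hx : f0 x = x) :
    fIterDeriv f0 f1 df0 df1 ζ k x = df0 x ^ k := by
  induction k with
  | zero => rfl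
  | succ k ih =>
    rw [fIterDeriv_succ, h k k.lt_succ_self, branch_zero, ih fun t ht => h t (by omega),
      fIter_of_eq_zero (fun t ht => h t (by omega)), Function.iterate_fixed hx, pow_succ]

lemma F_iterate (ζ : Seq2) (x : ℝ) (k : ℕ) :
    (F f0 f1)^[k] (ζ, x) = (shiftZ k ζ, fIter f0 f1 ζ k x) := by
  induction k with
  | zero => simp [fIter]
  | succ k ih =>
    rw [Function.iterate_succ_apply', ih, F, fIter_succ, branch]
    refine Prod.ext ?_ ?_
    · funext m
      simp [shift, add_assoc, add_comm (1 : ℤ)]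
    · simp only [shiftZ_apply, zero_add]
      split_ifs <;> rfl

noncomputable def invF0 (f0 : ℝ → ℝ) : ℝ → ℝ := Function.invFunOn f0 (Icc 0 1)

namespace H1

lemma continuous0 (h1 : H1 f0 f1 df0 df1 d) : Continuous f0 :=
  continuous_iff_continuousAt.2 fun x => (h1.hasDeriv0 x).continuousAt

lemma f0_one (h1 : H1 f0 f1 df0 df1 d) : f0 1 = 1 := by
  obtain ⟨y, hy, hfy⟩ := h1.surj0 (right_mem_Icc.2 zero_le_one)
  refine le_antisymm (h1.maps0 (right_mem_Icc.2 zero_le_one)).2 ?_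
  calc (1 : ℝ) = f0 y := hfy.symm
    _ ≤ f0 1 := h1.mono0.monotone hy.2

lemma f0_zero (h1 : H1 f0 f1 df0 df1 d) : f0 0 = 0 := by
  obtain ⟨y, hy, hfy⟩ := h1.surj0 (left_mem_Icc.2 zero_le_one)
  refine le_antisymm ?_ (h1.maps0 (left_mem_Icc.2 zero_le_one)).1
  calc f0 0 ≤ f0 y := h1.mono0.monotone hy.1
    _ = 0 := hfy

lemma f1_one_lt (h1 : H1 f0 f1 df0 df1 d) : f1 1 < 1 :=
  h1.f1_below 1 ⟨h1.d_mem.2.le, le_rfl⟩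

lemma le_f0 (h1 : H1 f0 f1 df0 df1 d) {x : ℝ} (hx : x ∈ Icc (0 : ℝ) 1) : x ≤ f0 x := by
  rcases hx.1.eq_or_lt with rfl | h0
  · rw [h1.f0_zero]
  rcases hx.2.eq_or_lt with rfl | h1'
  · rw [h1.f0_one]
  exact (h1.f0_above x ⟨h0, h1'⟩).le

lemma eq_zero_or_eq_one_of_f0_eq (h1 : H1 f0 f1 df0 df1 d) {x : ℝ} (hx : x ∈ Icc (0 : ℝ) 1)
    (hfx : f0 x = x) : x = 0 ∨ x = 1 := by
  by_contra! h
  exact (h1.f0_above x ⟨hx.1.lt_of_ne' h.1, hx.2.lt_of_ne h.2⟩).ne' hfx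

lemma eq_zero_or_eq_one_of_iterate_eq (h1 : H1 f0 f1 df0 df1 d) {x : ℝ} (hx : x ∈ Icc (0 : ℝ) 1)
    {n : ℕ} (hn : 0 < n) (hfx : f0^[n] x = x) : x = 0 ∨ x = 1 := by
  refine h1.eq_zero_or_eq_one_of_f0_eq hx (le_antisymm ?_ (h1.le_f0 hx))
  calc f0 x = f0^[1] x := rfl
    _ ≤ f0^[n] x := h1.mono0.monotone.monotone_iterate_of_le_map (h1.le_f0 hx) hn
    _ = x := hfx

lemma df0_pos (h1 : H1 f0 f1 df0 df1 d) (h2 : H2 df0 df1 d) {x : ℝ} (hx : x ∈ Icc (0 : ℝ) 1) :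
    0 < df0 x :=
  h1.deriv0_one.1.trans_le (h2.1.antitoneOn hx (right_mem_Icc.2 zero_le_one) hx.2)

lemma df1_pos (h1 : H1 f0 f1 df0 df1 d) (h2 : H2 df0 df1 d) {x : ℝ} (hx : x ∈ Icc d 1) :
    0 < df1 x :=
  h1.deriv1_one.trans_le (h2.2 hx (right_mem_Icc.2 h1.d_mem.2.le) hx.2)

lemma tendsto_f0_iterate (h1 : H1 f0 f1 df0 df1 d) {x : ℝ} (hx0 : 0 < x) (hx1 : x ≤ 1) :
    Tendsto (fun k => f0^[k] x) atTop (nhds 1) := by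
  have hmem : ∀ k, f0^[k] x ∈ Icc (0 : ℝ) 1 := fun k => h1.maps0.iterate k ⟨hx0.le, hx1⟩
  have hmono := h1.mono0.monotone.monotone_iterate_of_le_map (h1.le_f0 ⟨hx0.le, hx1⟩)
  have hbdd : BddAbove (range fun k => f0^[k] x) := ⟨1, forall_mem_range.2 fun k => (hmem k).2⟩
  have hlim := tendsto_atTop_ciSup hmono hbdd
  have hfix : f0 (⨆ k, f0^[k] x) = ⨆ k, f0^[k] x :=
    isFixedPt_of_tendsto_iterate hlim h1.continuous0.continuousAt
  have hxL : x ≤ ⨆ k, f0^[k] x := le_ciSup hbdd 0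
  rcases h1.eq_zero_or_eq_one_of_f0_eq ⟨hx0.le.trans hxL, ciSup_le fun k => (hmem k).2⟩ hfix
    with h | h
  · exact absurd (h ▸ hxL) hx0.not_ge
  · rwa [h] at hlim


lemma mapsTo_invF0 (h1 : H1 f0 f1 df0 df1 d) : MapsTo (invF0 f0) (Icc 0 1) (Icc 0 1) :=
  h1.surj0.mapsTo_invFunOn

lemma f0_invF0 (h1 : H1 f0 f1 df0 df1 d) {x : ℝ} (hx : x ∈ Icc (0 : ℝ) 1) :
    f0 (invF0 f0 x) = x :=
  h1.surj0.rightInvOn_invFunOn hx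

lemma invF0_one (h1 : H1 f0 f1 df0 df1 d) : invF0 f0 1 = 1 :=
  h1.mono0.injective (by rw [h1.f0_invF0 (right_mem_Icc.2 zero_le_one), h1.f0_one])

lemma tendsto_invF0_iterate (h1 : H1 f0 f1 df0 df1 d) {x : ℝ} (hx : x ∈ Icc (0 : ℝ) 1)
    (hx1 : x < 1) :
    Tendsto (fun m => (invF0 f0)^[m] x) atTop (nhds 0) := by
  have hmem : ∀ m, (invF0 f0)^[m] x ∈ Icc (0 : ℝ) 1 := fun m => h1.mapsTo_invF0.iterate m hx
  have hanti : Antitone fun m => (invF0 f0)^[m] x := by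
    refine antitone_nat_of_succ_le fun m => ?_
    rw [Function.iterate_succ_apply']
    calc invF0 f0 ((invF0 f0)^[m] x) ≤ f0 (invF0 f0 ((invF0 f0)^[m] x)) :=
          h1.le_f0 (h1.mapsTo_invF0 (hmem m))
      _ = (invF0 f0)^[m] x := h1.f0_invF0 (hmem m)
  have hbdd : BddBelow (range fun m => (invF0 f0)^[m] x) :=
    ⟨0, forall_mem_range.2 fun m => (hmem m).1⟩
  have hlim := tendsto_atTop_ciInf hanti hbdd
  -- `f₀` maps the `(m+1)`-st term to the `m`-th one, so the limit is a fixed point of `f₀`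
  have hfix : f0 (⨅ m, (invF0 f0)^[m] x) = ⨅ m, (invF0 f0)^[m] x := by
    refine tendsto_nhds_unique ?_ hlim
    refine ((h1.continuous0.tendsto _).comp (hlim.comp (tendsto_add_atTop_nat 1))).congr fun m => ?_
    simp only [Function.comp_apply, Function.iterate_succ_apply']
    exact h1.f0_invF0 (hmem m)
  rcases h1.eq_zero_or_eq_one_of_f0_eq
    ⟨le_ciInf fun m => (hmem m).1, (ciInf_le hbdd 0).trans hx1.le⟩ hfix with h | h
  · rwa [h] at hlim
  · exact absurd h ((ciInf_le hbdd 0).trans_lt hx1).ne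

lemma strictMono_branch (h1 : H1 f0 f1 df0 df1 d) (i : Fin 2) : StrictMono (branch f0 f1 i) := by
  by_cases hi : i = 0
  · rw [hi, branch_zero]; exact h1.mono0
  · rw [Fin.eq_one_of_ne_zero i hi, branch_one]; exact h1.mono1

lemma hasDerivAt_branch (h1 : H1 f0 f1 df0 df1 d) (i : Fin 2) (x : ℝ) :
    HasDerivAt (branch f0 f1 i) (branch df0 df1 i x) x := by
  by_cases hi : i = 0
  · rw [hi, branch_zero]; exact h1.hasDeriv0 x
  · rw [Fin.eq_one_of_ne_zero i hi, branch_one]; exact h1.hasDeriv1 x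

lemma branch_lt_one (h1 : H1 f0 f1 df0 df1 d) (i : Fin 2) {x : ℝ} (hx : x < 1) :
    branch f0 f1 i x < 1 := by
  by_cases hi : i = 0
  · rw [hi, branch_zero, ← h1.f0_one]; exact h1.mono0 hx
  · rw [Fin.eq_one_of_ne_zero i hi, branch_one]; exact (h1.mono1 hx).trans h1.f1_one_lt

lemma branch_deriv_pos (h1 : H1 f0 f1 df0 df1 d) (h2 : H2 df0 df1 d) {i : Fin 2} {x : ℝ}
    (hx : x ∈ Icc (0 : ℝ) 1) (hi : i = 1 → d ≤ x) : 0 < branch df0 df1 i x := by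
  by_cases h : i = 0
  · rw [h, branch_zero]; exact h1.df0_pos h2 hx
  · have h' := Fin.eq_one_of_ne_zero i h
    rw [h', branch_one]; exact h1.df1_pos h2 ⟨hi h', hx.2⟩

end H1

lemma H2.branch_deriv_le (h2 : H2 df0 df1 d) {i : Fin 2} {x y : ℝ} (hx : x ∈ Icc (0 : ℝ) 1)
    (hi : i = 1 → d ≤ x) (hxy : x ≤ y) (hy : y ≤ 1) :
    branch df0 df1 i y ≤ branch df0 df1 i x := by
  by_cases h : i = 0
  · rw [h, branch_zero]; exact h2.1.antitoneOn hx ⟨hx.1.trans hxy, hy⟩ hxy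
  · have h' := Fin.eq_one_of_ne_zero i h
    rw [h', branch_one]; exact h2.2 ⟨hi h', hx.2⟩ ⟨(hi h').trans hxy, hy⟩ hxy

lemma hasDerivAt_fIter (h1 : H1 f0 f1 df0 df1 d) (ζ : Seq2) (k : ℕ) (x : ℝ) :
    HasDerivAt (fIter f0 f1 ζ k) (fIterDeriv f0 f1 df0 df1 ζ k x) x := by
  induction k with
  | zero => exact (hasDerivAt_id x).congr_of_eventuallyEq (Eventually.of_forall fun _ => rfl)
  | succ k ih =>
    rw [fIterDeriv_succ, mul_comm]
    exact ((h1.hasDerivAt_branch (ζ k) _).comp x ih).congr_of_eventuallyEq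
      (Eventually.of_forall fun _ => rfl)

lemma continuous_fIter (h1 : H1 f0 f1 df0 df1 d) (ζ : Seq2) (k : ℕ) :
    Continuous (fIter f0 f1 ζ k) :=
  continuous_iff_continuousAt.2 fun x => (hasDerivAt_fIter h1 ζ k x).continuousAt

lemma strictMono_fIter (h1 : H1 f0 f1 df0 df1 d) (ζ : Seq2) (k : ℕ) :
    StrictMono (fIter f0 f1 ζ k) := by
  induction k with
  | zero => exact strictMono_id
  | succ k ih => exact (h1.strictMono_branch (ζ k)).comp ih

lemma fIter_lt_one (h1 : H1 f0 f1 df0 df1 d) (ζ : Seq2) (k : ℕ) {x : ℝ} (hx : x < 1) :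
    fIter f0 f1 ζ k x < 1 := by
  induction k with
  | zero => exact hx
  | succ k ih => exact h1.branch_lt_one (ζ k) ih

/-- Only the starting point is required to lie in `[0, 1]`: the fiber maps keep the orbit there
as long as `f₁` is applied on `[d, 1]` (`AdmissibleUpTo.fIter_mem_Icc`). -/
def AdmissibleUpTo (f0 f1 : ℝ → ℝ) (d : ℝ) (ζ : Seq2) (k : ℕ) (x : ℝ) : Prop :=
  x ∈ Icc (0 : ℝ) 1 ∧ ∀ t < k, ζ t = 1 → d ≤ fIter f0 f1 ζ t x

namespace AdmissibleUpTo

variable {ζ : Seq2} {k : ℕ} {x : ℝ}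

lemma mono {j : ℕ} (h : AdmissibleUpTo f0 f1 d ζ k x) (hjk : j ≤ k) :
    AdmissibleUpTo f0 f1 d ζ j x :=
  ⟨h.1, fun t ht => h.2 t (by omega)⟩

lemma succ (h : AdmissibleUpTo f0 f1 d ζ k x) (hk : ζ k = 1 → d ≤ fIter f0 f1 ζ k x) :
    AdmissibleUpTo f0 f1 d ζ (k + 1) x := by
  refine ⟨h.1, fun t ht => ?_⟩
  rcases (Nat.lt_succ_iff.1 ht).lt_or_eq with ht | rfl
  · exact h.2 t ht
  · exact hk

lemma fIter_mem_Icc (h1 : H1 f0 f1 df0 df1 d) (h : AdmissibleUpTo f0 f1 d ζ k x) :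
    ∀ t ≤ k, fIter f0 f1 ζ t x ∈ Icc (0 : ℝ) 1
  | 0, _ => h.1
  | t + 1, ht => by
    have hmem := fIter_mem_Icc h1 h t (by omega)
    rw [fIter_succ]
    by_cases hζ : ζ t = 0
    · rw [hζ, branch_zero]; exact h1.maps0 hmem
    · rw [Fin.eq_one_of_ne_zero _ hζ, branch_one]
      exact h1.maps1 ⟨h.2 t (by omega) (Fin.eq_one_of_ne_zero _ hζ), hmem.2⟩

lemma of_le (h1 : H1 f0 f1 df0 df1 d) (h : AdmissibleUpTo f0 f1 d ζ k x) {y : ℝ} (hxy : x ≤ y)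
    (hy : y ≤ 1) : AdmissibleUpTo f0 f1 d ζ k y :=
  ⟨⟨h.1.1.trans hxy, hy⟩, fun t ht hζ =>
    (h.2 t ht hζ).trans ((strictMono_fIter h1 ζ t).monotone hxy)⟩

end AdmissibleUpTo

section Admissible

variable {ζ : Seq2} {k : ℕ} {x : ℝ}

lemma forwardAdmissible_iff (h1 : H1 f0 f1 df0 df1 d) :
    forwardAdmissible f0 f1 d ζ x ↔ ∀ k, AdmissibleUpTo f0 f1 d ζ k x :=
  ⟨fun h _ => ⟨(h 0).1, fun t _ => (h t).2⟩,
    fun h t => ⟨(h t).fIter_mem_Icc h1 t le_rfl, (h (t + 1)).2 t t.lt_succ_self⟩⟩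

lemma exists_lt_of_not_forwardAdmissible (h1 : H1 f0 f1 df0 df1 d) (hx : x ∈ Icc (0 : ℝ) 1)
    (h : ¬ forwardAdmissible f0 f1 d ζ x) :
    ∃ t, AdmissibleUpTo f0 f1 d ζ t x ∧ ζ t = 1 ∧ fIter f0 f1 ζ t x < d := by
  classical
  simp only [forwardAdmissible_iff h1, not_forall] at h
  obtain ⟨t, ht⟩ : ∃ t, Nat.find h = t + 1 :=
    Nat.exists_eq_succ_of_ne_zero fun h0 =>
      Nat.find_spec h (h0 ▸ ⟨hx, fun _ h => absurd h (by omega)⟩)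
  have hadm : AdmissibleUpTo f0 f1 d ζ t x := not_not.1 (Nat.find_min h (by omega))
  refine ⟨t, hadm, ?_⟩
  by_contra! hlt
  exact Nat.find_spec h (ht ▸ hadm.succ hlt)

lemma fIterDeriv_pos (h1 : H1 f0 f1 df0 df1 d) (h2 : H2 df0 df1 d)
    (h : AdmissibleUpTo f0 f1 d ζ k x) : 0 < fIterDeriv f0 f1 df0 df1 ζ k x := by
  induction k with
  | zero => exact one_pos
  | succ k ih =>
    exact mul_pos (ih (h.mono k.le_succ))
      (h1.branch_deriv_pos h2 (h.fIter_mem_Icc h1 k k.le_succ) (h.2 k k.lt_succ_self))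

lemma fIterDeriv_le_of_le (h1 : H1 f0 f1 df0 df1 d) (h2 : H2 df0 df1 d) {a b : ℝ}
    (ha : AdmissibleUpTo f0 f1 d ζ k a) (hab : a ≤ b) (hb : b ≤ 1) :
    fIterDeriv f0 f1 df0 df1 ζ k b ≤ fIterDeriv f0 f1 df0 df1 ζ k a := by
  induction k with
  | zero => exact le_rfl
  | succ k ih =>
    have hb' := ha.of_le h1 hab hb
    exact mul_le_mul (ih (ha.mono k.le_succ))
      (h2.branch_deriv_le (ha.fIter_mem_Icc h1 k k.le_succ) (ha.2 k k.lt_succ_self)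
        ((strictMono_fIter h1 ζ k).monotone hab) (hb'.fIter_mem_Icc h1 k k.le_succ).2)
      (h1.branch_deriv_pos h2 (hb'.fIter_mem_Icc h1 k k.le_succ) (hb'.2 k k.lt_succ_self)).le
      (fIterDeriv_pos h1 h2 (ha.mono k.le_succ)).le

lemma fIterDeriv_lt_of_lt (h1 : H1 f0 f1 df0 df1 d) (h2 : H2 df0 df1 d) {a b : ℝ}
    (ha : AdmissibleUpTo f0 f1 d ζ k a) (hab : a < b) (hb : b ≤ 1)
    (hzero : ∃ j < k, ζ j = 0) :
    fIterDeriv f0 f1 df0 df1 ζ k b < fIterDeriv f0 f1 df0 df1 ζ k a := by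
  induction k with
  | zero => obtain ⟨j, hj, -⟩ := hzero; omega
  | succ k ih =>
    have ha' := ha.mono k.le_succ
    have hb' := ha.of_le h1 hab.le hb
    have hak := ha.fIter_mem_Icc h1 k k.le_succ
    have hbk := hb'.fIter_mem_Icc h1 k k.le_succ
    rw [fIterDeriv_succ, fIterDeriv_succ]
    by_cases hk : ∃ j < k, ζ j = 0
    · exact mul_lt_mul (ih ha' hk)
        (h2.branch_deriv_le hak (ha.2 k k.lt_succ_self) ((strictMono_fIter h1 ζ k).monotone hab.le)
          hbk.2)
        (h1.branch_deriv_pos h2 hbk (hb'.2 k k.lt_succ_self)) (fIterDeriv_pos h1 h2 ha').le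
    · obtain ⟨j, hj, hj0⟩ := hzero
      obtain rfl : j = k := by by_contra hjk; exact hk ⟨j, by omega, hj0⟩
      rw [hj0, branch_zero]
      exact mul_lt_mul' (fIterDeriv_le_of_le h1 h2 ha' hab.le hb)
        (h2.1 hak hbk (strictMono_fIter h1 ζ j hab)) (h1.df0_pos h2 hbk).le
        (fIterDeriv_pos h1 h2 ha')

end Admissible

section Periodic

variable {ξ : Seq2} {n : ℕ} {x : ℝ}

lemma apply_add_mul_of_periodic (hper : Function.Periodic ξ (n : ℤ)) (k : ℕ) (m : ℤ) :
    ξ (m + (n * k : ℕ)) = ξ m := by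
  simpa [mul_comm] using hper.nat_mul k m

lemma fIter_mul_add_of_periodic (hper : Function.Periodic ξ (n : ℤ)) (k t : ℕ) (x : ℝ) :
    fIter f0 f1 ξ (n * k + t) x = fIter f0 f1 ξ t (fIter f0 f1 ξ (n * k) x) := by
  rw [fIter_add]
  congr 1
  exact funext (apply_add_mul_of_periodic hper k)

lemma fIter_mul_of_periodic (hper : Function.Periodic ξ (n : ℤ)) (k : ℕ) (x : ℝ) :
    fIter f0 f1 ξ (n * k) x = (fIter f0 f1 ξ n)^[k] x := by
  induction k with
  | zero => rfl
  | succ k ih =>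
    rw [Nat.mul_succ, fIter_mul_add_of_periodic hper, ih, Function.iterate_succ_apply']

lemma forwardAdmissible_iterate_of_periodic (hper : Function.Periodic ξ (n : ℤ))
    (h : forwardAdmissible f0 f1 d ξ x) (k : ℕ) :
    forwardAdmissible f0 f1 d ξ ((fIter f0 f1 ξ n)^[k] x) := by
  intro t
  rw [← fIter_mul_of_periodic hper, ← fIter_mul_add_of_periodic hper]
  refine ⟨(h _).1, fun ht => (h _).2 ?_⟩
  rwa [Nat.cast_add, add_comm, apply_add_mul_of_periodic hper]

end Periodic

structure IsAdmissibleOrbit (f0 f1 : ℝ → ℝ) (d : ℝ) (ζ : Seq2) (z : ℤ → ℝ) :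
    Prop where
  step : ∀ t, z (t + 1) = branch f0 f1 (ζ t) (z t)
  mem_Icc : ∀ t, z t ∈ Icc (0 : ℝ) 1
  le_of_eq_one : ∀ t, ζ t = 1 → d ≤ z t

lemma tendsto_shiftZ_atTop {ζ : Seq2} (hζ : ∀ᶠ m in atTop, ζ m = 0) :
    Tendsto (fun s => shiftZ s ζ) atTop (nhds zeroSeq) :=
  tendsto_pi_nhds.2 fun j => tendsto_const_nhds.congr' <|
    ((tendsto_atTop_atTop.2 fun b => ⟨b - j, fun s hs => by omega⟩).eventually hζ).mono
      fun _ hs => hs.symm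

lemma tendsto_shiftZ_atBot {ζ : Seq2} (hζ : ∀ᶠ m in atBot, ζ m = 0) :
    Tendsto (fun s => shiftZ s ζ) atBot (nhds zeroSeq) :=
  tendsto_pi_nhds.2 fun j => tendsto_const_nhds.congr' <|
    ((tendsto_atBot_atBot.2 fun b => ⟨b - j, fun s hs => by omega⟩).eventually hζ).mono
      fun _ hs => hs.symm

namespace IsAdmissibleOrbit

variable {ζ : Seq2} {z : ℤ → ℝ}

lemma fIter_eq (hz : IsAdmissibleOrbit f0 f1 d ζ z) (t : ℤ) (k : ℕ) :
    fIter f0 f1 (shiftZ t ζ) k (z t) = z (t + k) := by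
  induction k with
  | zero => simp [fIter]
  | succ k ih =>
    rw [fIter_succ, ih, shiftZ_apply, add_comm (k : ℤ) t, Nat.cast_succ, ← add_assoc, hz.step]

lemma iterate_F (hz : IsAdmissibleOrbit f0 f1 d ζ z) (t : ℤ) (k : ℕ) :
    (F f0 f1)^[k] (shiftZ t ζ, z t) = (shiftZ (t + k) ζ, z (t + k)) := by
  rw [F_iterate, hz.fIter_eq, shiftZ_shiftZ, add_comm]

lemma mem_Gamma (hz : IsAdmissibleOrbit f0 f1 d ζ z) (t : ℤ) :
    (shiftZ t ζ, z t) ∈ Gamma f0 f1 d := by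
  refine ⟨fun k => ?_, fun m => z (t - m), by simp, fun m => ?_⟩
  · rw [hz.fIter_eq]
    refine ⟨hz.mem_Icc _, fun h => hz.le_of_eq_one _ ?_⟩
    have h' : ζ (k + t) = 1 := h
    rwa [add_comm] at h'
  · have hstep := hz.step (t - (m + 1))
    rw [show t - (m + 1) + 1 = t - m by ring] at hstep
    have hsym : shiftZ t ζ (-(m : ℤ) - 1) = ζ (t - (m + 1)) := by
      rw [shiftZ_apply]; ring_nf
    simp only [hsym, Nat.cast_succ]
    refine ⟨hz.mem_Icc _, fun h => ?_, fun h => ⟨hz.le_of_eq_one _ h, ?_⟩⟩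
    · rw [hstep, h, branch_zero]
    · rw [hstep, h, branch_one]

lemma mem_Ws (hz : IsAdmissibleOrbit f0 f1 d ζ z) (hζ : ∀ᶠ m in atTop, ζ m = 0) {a : ℝ}
    (hlim : Tendsto z atTop (nhds a)) (t : ℤ) :
    (shiftZ t ζ, z t) ∈ Ws f0 f1 d (zeroSeq, a) := by
  have ht : Tendsto (fun k : ℕ => t + k) atTop atTop :=
    tendsto_atTop_atTop.2 fun b => ⟨(b - t).toNat, fun k hk => by omega⟩
  refine ⟨fun k => hz.iterate_F t k ▸ hz.mem_Gamma _, ?_⟩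
  simp only [hz.iterate_F]
  exact ((tendsto_shiftZ_atTop hζ).comp ht).prodMk_nhds (hlim.comp ht)

lemma mem_Wu (hz : IsAdmissibleOrbit f0 f1 d ζ z) (hζ : ∀ᶠ m in atBot, ζ m = 0) {b : ℝ}
    (hlim : Tendsto z atBot (nhds b)) (t : ℤ) :
    (shiftZ t ζ, z t) ∈ Wu f0 f1 d (zeroSeq, b) := by
  have ht : Tendsto (fun m : ℕ => t - m) atTop atBot :=
    tendsto_atTop_atBot.2 fun b => ⟨(t - b).toNat, fun k hk => by omega⟩
  refine ⟨fun m => (shiftZ (t - m) ζ, z (t - m)), by simp, fun m => ⟨hz.mem_Gamma _, ?_⟩,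
    ((tendsto_shiftZ_atBot hζ).comp ht).prodMk_nhds (hlim.comp ht)⟩
  have := hz.iterate_F (t - (m + 1 : ℕ)) 1
  rw [show t - (m + 1 : ℕ) + (1 : ℕ) = t - m by push_cast; ring] at this
  simpa using this

end IsAdmissibleOrbit

noncomputable def gluedOrbit (f0 f1 : ℝ → ℝ) (η : Seq2) (v : ℝ) (t : ℤ) : ℝ :=
  if 0 ≤ t then fIter f0 f1 η t.toNat v else (invF0 f0)^[(-t).toNat] v

section GluedOrbit

variable {η : Seq2} {v : ℝ}

lemma gluedOrbit_natCast (k : ℕ) : gluedOrbit f0 f1 η v k = fIter f0 f1 η k v := by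
  simp [gluedOrbit]

lemma gluedOrbit_of_nonpos {t : ℤ} (ht : t ≤ 0) :
    gluedOrbit f0 f1 η v t = (invF0 f0)^[(-t).toNat] v := by
  unfold gluedOrbit
  split_ifs with h
  · obtain rfl : t = 0 := by omega
    rfl
  · rfl

lemma isAdmissibleOrbit_gluedOrbit (h1 : H1 f0 f1 df0 df1 d) (hη : ∀ t < 0, η t = 0)
    (hv : forwardAdmissible f0 f1 d η v) :
    IsAdmissibleOrbit f0 f1 d η (gluedOrbit f0 f1 η v) where
  step t := by
    rcases le_or_gt 0 t with ht | ht
    · lift t to ℕ using ht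
      rw [← Nat.cast_succ, gluedOrbit_natCast, gluedOrbit_natCast, fIter_succ]
    · have hmem : (invF0 f0)^[(-(t + 1)).toNat] v ∈ Icc (0 : ℝ) 1 :=
        h1.mapsTo_invF0.iterate _ (hv 0).1
      rw [hη t ht, branch_zero, gluedOrbit_of_nonpos ht.le, gluedOrbit_of_nonpos (by omega),
        show (-t).toNat = (-(t + 1)).toNat + 1 by omega, Function.iterate_succ_apply',
        h1.f0_invF0 hmem]
  mem_Icc t := by
    rcases le_or_gt 0 t with ht | ht
    · lift t to ℕ using ht
      rw [gluedOrbit_natCast]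
      exact (hv t).1
    · rw [gluedOrbit_of_nonpos ht.le]
      exact h1.mapsTo_invF0.iterate _ (hv 0).1
  le_of_eq_one t ht := by
    rcases le_or_gt 0 t with h0 | h0
    · lift t to ℕ using h0
      rw [gluedOrbit_natCast]
      exact (hv t).2 ht
    · exact absurd (hη t h0 ▸ ht) (by decide)

end GluedOrbit

def windowSeq (ξ : Seq2) (L : ℕ) : Seq2 := fun s => if 0 ≤ s ∧ s < L then ξ s else 0

section Window

variable {ξ : Seq2} {L : ℕ}

lemma windowSeq_of_mem {s : ℤ} (h0 : 0 ≤ s) (hL : s < L) : windowSeq ξ L s = ξ s :=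
  if_pos ⟨h0, hL⟩

lemma windowSeq_of_notMem {s : ℤ} (hs : s < 0 ∨ L ≤ s) : windowSeq ξ L s = 0 :=
  if_neg (by omega)

lemma fIter_windowSeq {k : ℕ} (hk : k ≤ L) (x : ℝ) :
    fIter f0 f1 (windowSeq ξ L) k x = fIter f0 f1 ξ k x :=
  fIter_congr (fun t ht => windowSeq_of_mem (by omega) (by omega)) x

lemma fIter_windowSeq_add (k : ℕ) (x : ℝ) :
    fIter f0 f1 (windowSeq ξ L) (L + k) x = f0^[k] (fIter f0 f1 ξ L x) := by
  have htail : ∀ t < k, shiftZ L (windowSeq ξ L) t = 0 := fun t _ => by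
    rw [shiftZ_apply]
    exact windowSeq_of_notMem (Or.inr (by omega))
  rw [fIter_add, fIter_windowSeq le_rfl, fIter_of_eq_zero htail]

lemma apply_shiftZ_windowSeq_of_periodic {B : ℕ} (hper : Function.Periodic ξ (B : ℤ)) {m : ℤ}
    (h0 : 0 ≤ m + B) (hL : m + B < L) : shiftZ B (windowSeq ξ L) m = ξ m := by
  rw [shiftZ_apply, windowSeq_of_mem h0 hL, hper]

lemma AdmissibleUpTo.forwardAdmissible_windowSeq (h1 : H1 f0 f1 df0 df1 d) {x : ℝ}
    (h : AdmissibleUpTo f0 f1 d ξ L x) : forwardAdmissible f0 f1 d (windowSeq ξ L) x := by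
  refine (forwardAdmissible_iff h1).2 fun k => ⟨h.1, fun t _ ht => ?_⟩
  by_cases htL : t < L
  · rw [windowSeq_of_mem (by omega) (by omega)] at ht
    rw [fIter_windowSeq htL.le]
    exact h.2 t htL ht
  · rw [windowSeq_of_notMem (Or.inr (by omega))] at ht
    exact absurd ht (by decide)

lemma mem_Ws_inter_Wu_of_window (h1 : H1 f0 f1 df0 df1 d) {v a b : ℝ}
    (hv : AdmissibleUpTo f0 f1 d ξ L v) (B : ℤ)
    (ha : Tendsto (fun k => f0^[k] (fIter f0 f1 ξ L v)) atTop (nhds a))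
    (hb : Tendsto (fun m => (invF0 f0)^[m] v) atTop (nhds b)) :
    (shiftZ B (windowSeq ξ L), gluedOrbit f0 f1 (windowSeq ξ L) v B) ∈
      Ws f0 f1 d (zeroSeq, a) ∩ Wu f0 f1 d (zeroSeq, b) := by
  have hz := isAdmissibleOrbit_gluedOrbit (η := windowSeq ξ L) h1
    (fun t ht => windowSeq_of_notMem (Or.inl ht)) (hv.forwardAdmissible_windowSeq h1)
  have hfwd : Tendsto (fun t : ℤ => (t - L).toNat) atTop atTop :=
    tendsto_atTop_atTop.2 fun c => ⟨c + L, fun t ht => by omega⟩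
  have hbwd : Tendsto (fun t : ℤ => (-t).toNat) atBot atTop :=
    tendsto_atBot_atTop.2 fun c => ⟨-(c : ℤ), fun t ht => by omega⟩
  refine ⟨hz.mem_Ws (eventually_atTop.2 ⟨L, fun m hm => windowSeq_of_notMem (Or.inr hm)⟩) ?_ B,
    hz.mem_Wu (eventually_atBot.2 ⟨-1, fun m hm => windowSeq_of_notMem (Or.inl (by omega))⟩)
      ?_ B⟩
  · refine (ha.comp hfwd).congr' ?_
    filter_upwards [eventually_ge_atTop (L : ℤ)] with t ht
    obtain ⟨k, rfl⟩ : ∃ k : ℕ, t = ((L + k : ℕ) : ℤ) := ⟨(t - L).toNat, by omega⟩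
    rw [Function.comp_apply, gluedOrbit_natCast, fIter_windowSeq_add,
      show (((L + k : ℕ) : ℤ) - L).toNat = k by omega]
  · refine (hb.comp hbwd).congr' ?_
    filter_upwards [eventually_le_atBot 0] with t ht
    exact (gluedOrbit_of_nonpos ht).symm

end Window

lemma mem_closure_of_forall_exists {S : Set (Seq2 × ℝ)} {ξ : Seq2} {r : ℝ}
    (h : ∀ N : ℕ, ∀ ε > 0, ∃ Y ∈ S,
      (∀ m : ℤ, |m| ≤ N → Y.1 m = ξ m) ∧ |Y.2 - r| < ε) :
    (ξ, r) ∈ closure S := by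
  choose Y hYS hY1 hY2 using fun N : ℕ => h N (1 / (N + 1)) Nat.one_div_pos_of_nat
  refine mem_closure_of_tendsto (b := atTop) ?_ (Eventually.of_forall hYS)
  refine (tendsto_pi_nhds.2 fun j => tendsto_const_nhds.congr' ?_).prodMk_nhds ?_
  · filter_upwards [eventually_ge_atTop j.natAbs] with N hN
    exact (hY1 N j (by rw [Int.abs_eq_natAbs]; exact_mod_cast hN)).symm
  · rw [tendsto_iff_dist_tendsto_zero]
    exact squeeze_zero (fun _ => dist_nonneg) (fun N => (hY2 N).le)
      tendsto_one_div_add_atTop_nhds_zero_nat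

lemma closure_Ws_inter_Wu_subset_homClass (R : Seq2 × ℝ) :
    closure (Ws f0 f1 d R ∩ Wu f0 f1 d R) ⊆ homClass f0 f1 d R :=
  closure_mono (inter_subset_inter (subset_iUnion (fun j => Ws f0 f1 d ((F f0 f1)^[j] R)) 0)
    (subset_iUnion (fun j => Wu f0 f1 d ((F f0 f1)^[j] R)) 0))

structure IsParabolicCycle (f0 f1 df0 df1 : ℝ → ℝ) (d : ℝ) (ξ : Seq2) (n : ℕ) (r : ℝ) :
    Prop where
  period_pos : 0 < n
  periodic : Function.Periodic ξ (n : ℤ)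
  fIter_eq : fIter f0 f1 ξ n r = r
  admissible : forwardAdmissible f0 f1 d ξ r
  deriv_eq : fIterDeriv f0 f1 df0 df1 ξ n r = 1

lemma IsParPerPt.exists_isParabolicCycle {ξ : Seq2} {r : ℝ}
    (h : IsParPerPt f0 f1 df0 df1 d (ξ, r)) : ∃ n, IsParabolicCycle f0 f1 df0 df1 d ξ n r := by
  obtain ⟨n, ⟨hΓ, hn, hper⟩, hder⟩ := h
  rw [F_iterate, Prod.mk.injEq] at hper
  exact ⟨n, hn, fun m => congrFun hper.1 m, hper.2, hΓ.1, hder⟩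

namespace IsParabolicCycle

variable {ξ : Seq2} {n : ℕ} {r : ℝ}

lemma admissibleUpTo (hc : IsParabolicCycle f0 f1 df0 df1 d ξ n r) (h1 : H1 f0 f1 df0 df1 d)
    (k : ℕ) : AdmissibleUpTo f0 f1 d ξ k r :=
  (forwardAdmissible_iff h1).1 hc.admissible k

lemma periodic_mul (hc : IsParabolicCycle f0 f1 df0 df1 d ξ n r) (k : ℕ) :
    Function.Periodic ξ ((n * k : ℕ) : ℤ) := by
  simpa [mul_comm] using hc.periodic.nat_mul k

lemma fIter_mul (hc : IsParabolicCycle f0 f1 df0 df1 d ξ n r) (k : ℕ) :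
    fIter f0 f1 ξ (n * k) r = r := by
  rw [fIter_mul_of_periodic hc.periodic, Function.iterate_fixed hc.fIter_eq]

lemma exists_eq_one (hc : IsParabolicCycle f0 f1 df0 df1 d ξ n r) (h1 : H1 f0 f1 df0 df1 d) :
    ∃ j < n, ξ j = 1 := by
  by_contra! hall
  have hzero : ∀ t : ℕ, ξ t = 0 := fun t => by
    rw [← Nat.mod_add_div t n, Nat.cast_add, apply_add_mul_of_periodic hc.periodic]
    by_contra h
    exact hall _ (Nat.mod_lt t hc.period_pos) (Fin.eq_one_of_ne_zero _ h)
  have hfix : f0^[n] r = r := by rw [← fIter_of_eq_zero (fun t _ => hzero t), hc.fIter_eq]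
  have hder := hc.deriv_eq
  rcases h1.eq_zero_or_eq_one_of_iterate_eq (hc.admissible 0).1 hc.period_pos hfix with rfl | rfl
  · rw [fIterDeriv_of_eq_zero (fun t _ => hzero t) h1.f0_zero] at hder
    exact (one_lt_pow₀ h1.deriv0_zero hc.period_pos.ne').ne' hder
  · rw [fIterDeriv_of_eq_zero (fun t _ => hzero t) h1.f0_one] at hder
    exact (pow_lt_one₀ h1.deriv0_one.1.le h1.deriv0_one.2 hc.period_pos.ne').ne hder

lemma exists_eq_zero (hc : IsParabolicCycle f0 f1 df0 df1 d ξ n r) (h1 : H1 f0 f1 df0 df1 d) :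
    ∃ j < n, ξ j = 0 := by
  by_contra! hall
  have hone : ∀ t < n, ξ t = 1 := fun t ht => Fin.eq_one_of_ne_zero _ (hall t ht)
  have hdecr : ∀ t < n, fIter f0 f1 ξ (t + 1) r < fIter f0 f1 ξ t r := fun t ht => by
    rw [fIter_succ, hone t ht, branch_one]
    exact h1.f1_below _ ⟨(hc.admissible t).2 (hone t ht), (hc.admissible t).1.2⟩
  have hle : ∀ t ≤ n, fIter f0 f1 ξ t r ≤ r := fun t ht => by
    induction t with
    | zero => exact le_rfl
    | succ t ih => exact (hdecr t ht).le.trans (ih (by omega))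
  obtain ⟨m, rfl⟩ : ∃ m, n = m + 1 := ⟨n - 1, by have := hc.period_pos; omega⟩
  exact (hdecr m (by omega)).trans_le (hle m (by omega)) |>.ne hc.fIter_eq

lemma fIter_ne_zero (hc : IsParabolicCycle f0 f1 df0 df1 d ξ n r) (h1 : H1 f0 f1 df0 df1 d)
    (t : ℕ) : fIter f0 f1 ξ t r ≠ 0 := by
  intro h0
  -- `0` is fixed by `f₀` and cannot enter the domain `[d, 1]` of `f₁`
  have hzero : ∀ m, fIter f0 f1 ξ (t + m) r = 0 := fun m => by
    induction m with
    | zero => exact h0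
    | succ m ih =>
      rw [← add_assoc, fIter_succ, ih]
      by_cases hζ : ξ ((t + m : ℕ) : ℤ) = 0
      · rw [hζ, branch_zero, h1.f0_zero]
      · have := (hc.admissible (t + m)).2 (Fin.eq_one_of_ne_zero _ hζ)
        rw [ih] at this
        exact absurd this h1.d_mem.1.not_ge
  obtain ⟨j, -, hj⟩ := hc.exists_eq_one h1
  obtain ⟨m, hm⟩ := Nat.exists_eq_add_of_le
    ((Nat.le_mul_of_pos_left t hc.period_pos).trans (Nat.le_add_left _ j))
  have hsym : ξ ((t + m : ℕ) : ℤ) = 1 := by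
    rw [← hm, Nat.cast_add, apply_add_mul_of_periodic hc.periodic, hj]
  exact h1.d_mem.1.not_ge (hzero m ▸ (hc.admissible _).2 hsym)

lemma pos (hc : IsParabolicCycle f0 f1 df0 df1 d ξ n r) (h1 : H1 f0 f1 df0 df1 d) : 0 < r :=
  (hc.admissible 0).1.1.lt_of_ne' (hc.fIter_ne_zero h1 0)

lemma lt_one (hc : IsParabolicCycle f0 f1 df0 df1 d ξ n r) (h1 : H1 f0 f1 df0 df1 d) : r < 1 := by
  refine (hc.admissible 0).1.2.lt_of_ne fun hr => ?_
  obtain ⟨j, -, hj⟩ := hc.exists_eq_one h1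
  have hj1 : fIter f0 f1 ξ (j + 1) r < 1 := by
    rw [fIter_succ, hj, branch_one]
    exact (h1.mono1.monotone (hc.admissible j).1.2).trans_lt h1.f1_one_lt
  obtain ⟨s, hs⟩ := Nat.exists_eq_add_of_le (Nat.le_mul_of_pos_left (j + 1) hc.period_pos)
  have := fIter_lt_one h1 (shiftZ ((j + 1 : ℕ) : ℤ) ξ) s hj1
  rw [← fIter_add, ← hs, hc.fIter_mul] at this
  exact this.ne hr

lemma d_lt_fIter (hc : IsParabolicCycle f0 f1 df0 df1 d ξ n r) (h1 : H1 f0 f1 df0 df1 d) {t : ℕ}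
    (ht : ξ t = 1) : d < fIter f0 f1 ξ t r :=
  ((hc.admissible t).2 ht).lt_of_ne fun h =>
    hc.fIter_ne_zero h1 (t + 1) (by rw [fIter_succ, ht, branch_one, ← h, h1.f1_d])

lemma one_lt_fIterDeriv (hc : IsParabolicCycle f0 f1 df0 df1 d ξ n r) (h1 : H1 f0 f1 df0 df1 d)
    (h2 : H2 df0 df1 d) {y : ℝ} (hy : AdmissibleUpTo f0 f1 d ξ n y) (hyr : y < r) :
    1 < fIterDeriv f0 f1 df0 df1 ξ n y :=
  hc.deriv_eq ▸ fIterDeriv_lt_of_lt h1 h2 hy hyr (hc.admissible 0).1.2 (hc.exists_eq_zero h1)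

lemma fIterDeriv_lt_one (hc : IsParabolicCycle f0 f1 df0 df1 d ξ n r) (h1 : H1 f0 f1 df0 df1 d)
    (h2 : H2 df0 df1 d) {y : ℝ} (hry : r < y) (hy : y ≤ 1) :
    fIterDeriv f0 f1 df0 df1 ξ n y < 1 :=
  hc.deriv_eq ▸ fIterDeriv_lt_of_lt h1 h2 (hc.admissibleUpTo h1 n) hry hy (hc.exists_eq_zero h1)

lemma fIter_lt_self_of_lt (hc : IsParabolicCycle f0 f1 df0 df1 d ξ n r) (h1 : H1 f0 f1 df0 df1 d)
    (h2 : H2 df0 df1 d) {y : ℝ} (hyr : y < r)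
    (hadm : ∀ c ∈ Ioo y r, AdmissibleUpTo f0 f1 d ξ n c) :
    fIter f0 f1 ξ n y < y := by
  obtain ⟨c, hc', hslope⟩ := exists_hasDerivAt_eq_slope (fIter f0 f1 ξ n)
    (fIterDeriv f0 f1 df0 df1 ξ n) hyr (continuous_fIter h1 ξ n).continuousOn
    fun c _ => hasDerivAt_fIter h1 ξ n c
  have := hc.one_lt_fIterDeriv h1 h2 (hadm c hc') hc'.2
  rw [hslope, hc.fIter_eq, one_lt_div (sub_pos.2 hyr)] at this
  linarith

lemma fIter_lt_self_of_gt (hc : IsParabolicCycle f0 f1 df0 df1 d ξ n r) (h1 : H1 f0 f1 df0 df1 d)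
    (h2 : H2 df0 df1 d) {y : ℝ} (hry : r < y) (hy : y ≤ 1) : fIter f0 f1 ξ n y < y := by
  obtain ⟨c, hc', hslope⟩ := exists_hasDerivAt_eq_slope (fIter f0 f1 ξ n)
    (fIterDeriv f0 f1 df0 df1 ξ n) hry (continuous_fIter h1 ξ n).continuousOn
    fun c _ => hasDerivAt_fIter h1 ξ n c
  have := hc.fIterDeriv_lt_one h1 h2 hc'.1 (hc'.2.le.trans hy)
  rw [hslope, hc.fIter_eq, div_lt_one (sub_pos.2 hry)] at this
  linarith

lemma not_forwardAdmissible_of_lt (hc : IsParabolicCycle f0 f1 df0 df1 d ξ n r)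
    (h1 : H1 f0 f1 df0 df1 d) (h2 : H2 df0 df1 d) {x : ℝ} (hxr : x < r) :
    ¬ forwardAdmissible f0 f1 d ξ x := by
  intro hx
  set u : ℕ → ℝ := fun k => (fIter f0 f1 ξ n)^[k] x
  have hadm : ∀ k, forwardAdmissible f0 f1 d ξ (u k) :=
    forwardAdmissible_iterate_of_periodic hc.periodic hx
  have hadm' : ∀ k, ∀ c ∈ Icc (u k) 1, AdmissibleUpTo f0 f1 d ξ n c := fun k c hc' =>
    ((forwardAdmissible_iff h1).1 (hadm k) n).of_le h1 hc'.1 hc'.2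
  have hlt : ∀ k, u k < r := fun k => by
    simpa [u, Function.iterate_fixed hc.fIter_eq] using (strictMono_fIter h1 ξ n).iterate k hxr
  have hanti : Antitone u := antitone_nat_of_succ_le fun k => by
    simp only [u, Function.iterate_succ_apply']
    exact (hc.fIter_lt_self_of_lt h1 h2 (hlt k) fun c hc' =>
      hadm' k c ⟨hc'.1.le, hc'.2.le.trans (hc.lt_one h1).le⟩).le
  have hbdd : BddBelow (range u) := ⟨0, forall_mem_range.2 fun k => (hadm k 0).1.1⟩
  have hlim := tendsto_atTop_ciInf hanti hbdd
  have hfix : fIter f0 f1 ξ n (⨅ k, u k) = ⨅ k, u k :=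
    isFixedPt_of_tendsto_iterate hlim (continuous_fIter h1 ξ n).continuousAt
  -- the limit need not be admissible, but every point of `(limit, r)` lies above some `u k`
  refine (hc.fIter_lt_self_of_lt h1 h2 ((ciInf_le hbdd 0).trans_lt (hlt 0)) fun c hc' => ?_).ne hfix
  obtain ⟨k, hk⟩ := (hlim.eventually (gt_mem_nhds hc'.1)).exists
  exact hadm' k c ⟨hk.le, hc'.2.le.trans (hc.lt_one h1).le⟩

lemma tendsto_iterate_one (hc : IsParabolicCycle f0 f1 df0 df1 d ξ n r) (h1 : H1 f0 f1 df0 df1 d)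
    (h2 : H2 df0 df1 d) : Tendsto (fun k => (fIter f0 f1 ξ n)^[k] 1) atTop (nhds r) := by
  set u : ℕ → ℝ := fun k => (fIter f0 f1 ξ n)^[k] 1
  have hmem : ∀ k, u k ∈ Icc r 1 := fun k => by
    refine ⟨?_, ?_⟩
    · simpa [u, Function.iterate_fixed hc.fIter_eq] using
        (strictMono_fIter h1 ξ n).monotone.iterate k (hc.lt_one h1).le
    · simpa [u, ← fIter_mul_of_periodic hc.periodic] using
        (((hc.admissibleUpTo h1 (n * k)).of_le h1 (hc.lt_one h1).le le_rfl).fIter_mem_Icc h1 _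
          le_rfl).2
  have hle : ∀ y ∈ Icc r 1, fIter f0 f1 ξ n y ≤ y := fun y hy => by
    rcases hy.1.eq_or_lt with rfl | hry
    · exact hc.fIter_eq.le
    · exact (hc.fIter_lt_self_of_gt h1 h2 hry hy.2).le
  have hanti : Antitone u := antitone_nat_of_succ_le fun k => by
    simp only [u, Function.iterate_succ_apply']
    exact hle _ (hmem k)
  have hbdd : BddBelow (range u) := ⟨r, forall_mem_range.2 fun k => (hmem k).1⟩
  have hlim := tendsto_atTop_ciInf hanti hbdd
  have hfix : fIter f0 f1 ξ n (⨅ k, u k) = ⨅ k, u k :=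
    isFixedPt_of_tendsto_iterate hlim (continuous_fIter h1 ξ n).continuousAt
  have hL : ⨅ k, u k ∈ Icc r 1 :=
    ⟨le_ciInf fun k => (hmem k).1, (ciInf_le hbdd 0).trans (hmem 0).2⟩
  rcases hL.1.eq_or_lt with h | h
  · rwa [← h] at hlim
  · exact absurd hfix (hc.fIter_lt_self_of_gt h1 h2 h hL.2).ne

/-- Run `ξ` for `2K` periods starting from `1` at time `-nK`, with `0`'s before and after. -/
lemma exists_near_Pfix (hc : IsParabolicCycle f0 f1 df0 df1 d ξ n r) (h1 : H1 f0 f1 df0 df1 d)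
    (h2 : H2 df0 df1 d) (N : ℕ) {ε : ℝ} (hε : 0 < ε) :
    ∃ Y ∈ Ws f0 f1 d Pfix ∩ Wu f0 f1 d Pfix,
      (∀ m : ℤ, |m| ≤ N → Y.1 m = ξ m) ∧ |Y.2 - r| < ε := by
  obtain ⟨K, hKN, hK⟩ := ((eventually_gt_atTop N).and ((hc.tendsto_iterate_one h1 h2).eventually
    (Metric.ball_mem_nhds r hε))).exists
  have hKB : K ≤ n * K := Nat.le_mul_of_pos_left K hc.period_pos
  have hv : AdmissibleUpTo f0 f1 d ξ (2 * (n * K)) 1 :=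
    (hc.admissibleUpTo h1 _).of_le h1 (hc.lt_one h1).le le_rfl
  have hpos : 0 < fIter f0 f1 ξ (2 * (n * K)) 1 := by
    refine (hc.pos h1).trans_le ?_
    calc r = fIter f0 f1 ξ (n * (2 * K)) r := (hc.fIter_mul _).symm
      _ ≤ _ := by
        rw [mul_left_comm]
        exact (strictMono_fIter h1 ξ _).monotone (hc.lt_one h1).le
  refine ⟨_, mem_Ws_inter_Wu_of_window h1 hv (n * K : ℕ)
    (h1.tendsto_f0_iterate hpos (hv.fIter_mem_Icc h1 _ le_rfl).2) ?_, fun m hm => ?_, ?_⟩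
  · simp only [Function.iterate_fixed h1.invF0_one]
    exact tendsto_const_nhds
  · have := abs_le.1 hm
    exact apply_shiftZ_windowSeq_of_periodic (hc.periodic_mul K) (by omega) (by push_cast; omega)
  · rw [gluedOrbit_natCast, fIter_windowSeq (by omega), fIter_mul_of_periodic hc.periodic,
      ← Real.dist_eq]
    exact hK

lemma eventually_abs_fIter_sub_lt_and_d_lt (hc : IsParabolicCycle f0 f1 df0 df1 d ξ n r)
    (h1 : H1 f0 f1 df0 df1 d) (K L : ℕ) {ε : ℝ} (hε : 0 < ε) :
    ∀ᶠ y in nhds r, |fIter f0 f1 ξ (n * K) y - r| < ε ∧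
      ∀ s ∈ Iio L, ξ s = 1 → d < fIter f0 f1 ξ s y := by
  refine Eventually.and ?_ ((eventually_all_finite (finite_Iio _)).2 fun s _ => ?_)
  · have := (continuous_fIter h1 ξ (n * K)).tendsto r
    rw [hc.fIter_mul] at this
    simpa [Real.dist_eq] using this.eventually (Metric.ball_mem_nhds r hε)
  · by_cases hs : ξ s = 1
    · exact (((continuous_fIter h1 ξ s).tendsto r).eventually
        (lt_mem_nhds (hc.d_lt_fIter h1 hs))).mono fun _ h _ => h
    · exact Eventually.of_forall fun _ h => absurd h hs

/-- Start slightly below `r` at time `-n(N+1)`; the orbit first violates admissibility at a late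
`1`-symbol `t`, and moving the starting point towards `r` makes it hit `d` exactly at time `t`,
after which it is mapped to `f₁(d) = 0`. -/
lemma exists_near_Qfix (hc : IsParabolicCycle f0 f1 df0 df1 d ξ n r) (h1 : H1 f0 f1 df0 df1 d)
    (h2 : H2 df0 df1 d) (N : ℕ) {ε : ℝ} (hε : 0 < ε) :
    ∃ Y ∈ Ws f0 f1 d Qfix ∩ Wu f0 f1 d Qfix,
      (∀ m : ℤ, |m| ≤ N → Y.1 m = ξ m) ∧ |Y.2 - r| < ε := by
  have hNB : N < n * (N + 1) :=
    Nat.lt_of_lt_of_le N.lt_succ_self (Nat.le_mul_of_pos_left _ hc.period_pos)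
  obtain ⟨l, hl, hsub⟩ := exists_Ioc_subset_of_mem_nhds'
    (hc.eventually_abs_fIter_sub_lt_and_d_lt h1 (N + 1) (2 * (n * (N + 1))) hε) (hc.pos h1)
  have hv₀ : (l + r) / 2 ∈ Ioo l r := ⟨by linarith [hl.2], by linarith [hl.2]⟩
  obtain ⟨t, hadm, ht1, htd⟩ := exists_lt_of_not_forwardAdmissible h1
    ⟨by linarith [hl.1, hv₀.1], by linarith [hv₀.2, hc.lt_one h1]⟩
    (hc.not_forwardAdmissible_of_lt h1 h2 hv₀.2)
  have htB : 2 * (n * (N + 1)) ≤ t := by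
    by_contra! h
    exact htd.not_ge ((hsub ⟨hv₀.1, hv₀.2.le⟩).2 t h ht1).le
  obtain ⟨v, hv, hvd⟩ := intermediate_value_Ioo hv₀.2.le (continuous_fIter h1 ξ t).continuousOn
    ⟨htd, hc.d_lt_fIter h1 ht1⟩
  have hvadm : AdmissibleUpTo f0 f1 d ξ (t + 1) v :=
    (hadm.of_le h1 hv.1.le (hv.2.le.trans (hc.lt_one h1).le)).succ fun _ => hvd.ge
  have hzero : fIter f0 f1 ξ (t + 1) v = 0 := by rw [fIter_succ, ht1, branch_one, hvd, h1.f1_d]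
  refine ⟨_, mem_Ws_inter_Wu_of_window h1 hvadm (n * (N + 1) : ℕ) ?_
    (h1.tendsto_invF0_iterate hvadm.1 (hv.2.trans (hc.lt_one h1))), fun m hm => ?_, ?_⟩
  · simp only [hzero, Function.iterate_fixed h1.f0_zero]
    exact tendsto_const_nhds
  · have := abs_le.1 hm
    exact apply_shiftZ_windowSeq_of_periodic (hc.periodic_mul _) (by omega) (by omega)
  · rw [gluedOrbit_natCast, fIter_windowSeq (by omega)]
    exact (hsub ⟨hv₀.1.trans hv.1, hv.2.le⟩).1

end IsParabolicCycle

theorem statement_12 (f0 f1 df0 df1 : ℝ → ℝ) (d : ℝ) (hH1 : H1 f0 f1 df0 df1 d)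
    (hH2 : H2 df0 df1 d) :
    (∀ X : Seq2 × ℝ, IsParPerPt f0 f1 df0 df1 d X →
      X ∈ homClass f0 f1 d Pfix ∩ homClass f0 f1 d Qfix) ∧
    ((∃ X : Seq2 × ℝ, IsParPerPt f0 f1 df0 df1 d X) →
      (homClass f0 f1 d Pfix ∩ homClass f0 f1 d Qfix).Nonempty) := by
  have hmem : ∀ X : Seq2 × ℝ, IsParPerPt f0 f1 df0 df1 d X →
      X ∈ homClass f0 f1 d Pfix ∩ homClass f0 f1 d Qfix := by
    rintro ⟨ξ, r⟩ hX
    obtain ⟨n, hc⟩ := hX.exists_isParabolicCycle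
    exact ⟨closure_Ws_inter_Wu_subset_homClass _
        (mem_closure_of_forall_exists fun N _ hε => hc.exists_near_Pfix hH1 hH2 N hε),
      closure_Ws_inter_Wu_subset_homClass _
        (mem_closure_of_forall_exists fun N _ hε => hc.exists_near_Qfix hH1 hH2 N hε)⟩
  exact ⟨hmem, fun ⟨X, hX⟩ => ⟨X, hmem X hX⟩⟩

end DGR
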